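/- Let C be a linear subspace of B_b containing the constant functions and let H : C → ℝ be a sublinear premium principle. Then R_Max is a coherent risk measure: for every X ∈ B_b, R_Max(X) = max_{μ ∈ 𝒫} μ(X), where 𝒫 := {μ : μ is a normalized positive linear functional on B_b with μ(X) ≤ H(X) for all X ∈ C}; in particular the maximum is attained and 𝒫 is nonempty. -/

import Mathlib

open MeasureTheory

/-- The set of bounded measurable functions `Ω → ℝ`. -/
def Bb (Ω : Type*) [MeasurableSpace Ω] : Set (Ω → ℝ) :=
  {X | Measurable X ∧ ∃ c : ℝ, ∀ ω, |X ω| ≤ c}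

/-- `H` is a premium principle on `C`: (P1) cash additivity and
(P2) `H 0 = 0` and nonnegativity on nonnegative claims. -/
def IsPremium {Ω : Type*} (C : Set (Ω → ℝ)) (H : (Ω → ℝ) → ℝ) : Prop :=
  (∀ X ∈ C, ∀ m : ℝ, H (fun ω => X ω + m) = H X + m) ∧
  H (fun _ => 0) = 0 ∧
  ∀ X ∈ C, (∀ ω, 0 ≤ X ω) → 0 ≤ H X

/-- `R` is a (monetary) risk measure on `B_b`. -/
def IsRisk {Ω : Type*} [MeasurableSpace Ω] (R : (Ω → ℝ) → ℝ) : Prop :=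
  (∀ X ∈ Bb Ω, ∀ m : ℝ, R (fun ω => X ω + m) = R X + m) ∧
  R (fun _ => 0) = 0 ∧
  ∀ X ∈ Bb Ω, ∀ Y ∈ Bb Ω, (∀ ω, X ω ≤ Y ω) → R X ≤ R Y

/-- `D` is a deviation measure on `C`. -/
def IsDeviation {Ω : Type*} (C : Set (Ω → ℝ)) (D : (Ω → ℝ) → ℝ) : Prop :=
  (∀ X ∈ C, ∀ m : ℝ, D (fun ω => X ω + m) = D X) ∧
  D (fun _ => 0) = 0 ∧
  ∀ X ∈ C, 0 ≤ D X

/-- The maximal risk measure `R_Max(X) = inf {H X₀ | X₀ ∈ C, X₀ ≥ X}`. -/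
noncomputable def RMax {Ω : Type*} (C : Set (Ω → ℝ)) (H : (Ω → ℝ) → ℝ) (X : Ω → ℝ) : ℝ :=
  sInf {y | ∃ X₀ ∈ C, (∀ ω, X ω ≤ X₀ ω) ∧ H X₀ = y}

/-- The minimal deviation measure `D_Min = H - R_Max`. -/
noncomputable def DMin {Ω : Type*} (C : Set (Ω → ℝ)) (H : (Ω → ℝ) → ℝ) (X : Ω → ℝ) : ℝ :=
  H X - RMax C H X

/-- A normalized positive linear functional on `B_b` (a finitely additive probability). -/
def IsNPLF {Ω : Type*} [MeasurableSpace Ω] (μ : (Ω → ℝ) → ℝ) : Prop :=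
  (∀ X ∈ Bb Ω, ∀ Y ∈ Bb Ω, μ (fun ω => X ω + Y ω) = μ X + μ Y) ∧
  (∀ X ∈ Bb Ω, ∀ c : ℝ, μ (fun ω => c * X ω) = c * μ X) ∧
  (∀ X ∈ Bb Ω, (∀ ω, 0 ≤ X ω) → 0 ≤ μ X) ∧
  μ (fun _ => 1) = 1

/-- The convex dual `H*(μ) = sup_{X ∈ C} (μ X - H X)`, valued in `EReal`. -/
noncomputable def Hstar {Ω : Type*} (C : Set (Ω → ℝ)) (H : (Ω → ℝ) → ℝ)
    (μ : (Ω → ℝ) → ℝ) : EReal :=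
  ⨆ X ∈ C, ((μ X - H X : ℝ) : EReal)

/-- `H` is convex on `C`. -/
def IsConvexOn {Ω : Type*} (C : Set (Ω → ℝ)) (H : (Ω → ℝ) → ℝ) : Prop :=
  ∀ X ∈ C, ∀ Y ∈ C, ∀ l : ℝ, 0 ≤ l → l ≤ 1 →
    H (fun ω => l * X ω + (1 - l) * Y ω) ≤ l * H X + (1 - l) * H Y


/-!
`R_Max` is a sublinear functional on `B_b`: subadditivity and positive homogeneity pass from `H`
to the infimum over dominating claims in `C`. By Hahn–Banach, for each `X` there is a linear
functional `μ ≤ R_Max` with `μ X = R_Max X`. Such a `μ` is positive because `R_Max` is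
nonpositive on nonpositive claims, normalized because `R_Max` agrees with `H` on constants, and
dominated by `H` on `C` because `R_Max ≤ H` there. Conversely every positive `μ` dominated by
`H` on `C` satisfies `μ X ≤ μ X₀ ≤ H X₀` for every `X₀ ∈ C` above `X`, so `μ X ≤ R_Max X`.
-/

theorem exists_linearMap_le_sublinear_eq {E : Type*} [AddCommGroup E] [Module ℝ E] (N : E → ℝ)
    (N_hom : ∀ c : ℝ, 0 < c → ∀ x, N (c • x) = c * N x) (N_add : ∀ x y, N (x + y) ≤ N x + N y)
    (x : E) : ∃ g : E →ₗ[ℝ] ℝ, g x = N x ∧ ∀ y, g y ≤ N y := by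
  have N_zero : N 0 = 0 := by
    have h := N_hom 2 two_pos 0
    rw [smul_zero] at h
    linarith
  have le_smul : ∀ c : ℝ, c * N x ≤ N (c • x) := by
    intro c
    rcases lt_trichotomy c 0 with hc | rfl | hc
    · have h := N_add (c • x) ((-c) • x)
      rw [← add_smul, add_neg_cancel, zero_smul, N_zero, N_hom (-c) (neg_pos.2 hc)] at h
      linarith
    · simp [N_zero]
    · rw [N_hom c hc]
  have hker : ∀ c : ℝ, c • x = 0 → c • N x = 0 := by
    intro c hc
    have h₁ := le_smul c
    have h₂ := le_smul (-c)
    rw [hc, N_zero] at h₁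
    rw [neg_smul, hc, neg_zero, N_zero] at h₂
    rw [smul_eq_mul]
    linarith
  obtain ⟨g, hg_eq, hg_le⟩ := exists_extension_of_le_sublinear
    (LinearPMap.mkSpanSingleton' x (N x) hker) N N_hom N_add (by
      rintro ⟨_, hy⟩
      obtain ⟨c, rfl⟩ := Submodule.mem_span_singleton.1 hy
      rw [LinearPMap.mkSpanSingleton'_apply]
      exact le_smul c)
  exact ⟨g, (hg_eq ⟨x, Submodule.mem_span_singleton_self x⟩).trans
    (LinearPMap.mkSpanSingleton'_apply_self _ _ _ _), hg_le⟩

section Bb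

variable {Ω : Type*} [MeasurableSpace Ω]

theorem Bb.const_mem (m : ℝ) : (fun _ => m) ∈ Bb Ω :=
  ⟨measurable_const, |m|, fun _ => le_rfl⟩

theorem Bb.add_mem {X Y : Ω → ℝ} (hX : X ∈ Bb Ω) (hY : Y ∈ Bb Ω) : X + Y ∈ Bb Ω := by
  obtain ⟨hXm, a, ha⟩ := hX
  obtain ⟨hYm, b, hb⟩ := hY
  exact ⟨hXm.add hYm, a + b, fun ω => (abs_add_le _ _).trans (add_le_add (ha ω) (hb ω))⟩

theorem Bb.smul_mem (c : ℝ) {X : Ω → ℝ} (hX : X ∈ Bb Ω) : c • X ∈ Bb Ω := by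
  obtain ⟨hXm, a, ha⟩ := hX
  refine ⟨hXm.const_smul c, |c| * a, fun ω => ?_⟩
  rw [Pi.smul_apply, smul_eq_mul, abs_mul]
  exact mul_le_mul_of_nonneg_left (ha ω) (abs_nonneg c)

variable (Ω) in
def Bb.submodule : Submodule ℝ (Ω → ℝ) where
  carrier := Bb Ω
  zero_mem' := Bb.const_mem 0
  add_mem' := Bb.add_mem
  smul_mem' := Bb.smul_mem

theorem IsNPLF.mono {μ : (Ω → ℝ) → ℝ} (hμ : IsNPLF μ) {X Y : Ω → ℝ} (hX : X ∈ Bb Ω)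
    (hY : Y ∈ Bb Ω) (hXY : X ≤ Y) : μ X ≤ μ Y := by
  have hD : Y - X ∈ Bb Ω := (Bb.submodule Ω).sub_mem hY hX
  have h := hμ.1 X hX (Y - X) hD
  simp only [Pi.sub_apply, add_sub_cancel] at h
  rw [h, le_add_iff_nonneg_right]
  exact hμ.2.2.1 _ hD fun ω => sub_nonneg.2 (hXY ω)

theorem isNPLF_of_linearMap (μ : (Ω → ℝ) →ₗ[ℝ] ℝ)
    (hpos : ∀ X ∈ Bb Ω, 0 ≤ X → 0 ≤ μ X) (hone : μ 1 = 1) : IsNPLF μ :=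
  ⟨fun X _ Y _ => map_add μ X Y, fun X _ c => map_smul μ c X, hpos, hone⟩

end Bb

section Premium

variable {Ω : Type*} {C : Set (Ω → ℝ)} {H : (Ω → ℝ) → ℝ}

theorem IsPremium.apply_const (hH : IsPremium C H) (hconst : ∀ m : ℝ, (fun _ => m) ∈ C)
    (m : ℝ) : H (fun _ => m) = m := by
  simpa [hH.2.1] using hH.1 _ (hconst 0) m

theorem IsConvexOn.add_le (hconv : IsConvexOn C H)
    (haddC : ∀ X ∈ C, ∀ Y ∈ C, (fun ω => X ω + Y ω) ∈ C)
    (hsmulC : ∀ X ∈ C, ∀ c : ℝ, (fun ω => c * X ω) ∈ C)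
    (hpos : ∀ X ∈ C, ∀ l : ℝ, 0 < l → H (fun ω => l * X ω) = l * H X)
    {X Y : Ω → ℝ} (hX : X ∈ C) (hY : Y ∈ C) : H (X + Y) ≤ H X + H Y := by
  have hmid := haddC _ (hsmulC X hX (1 / 2)) _ (hsmulC Y hY (1 - 1 / 2))
  have hsum : X + Y = fun ω => 2 * ((1 / 2) * X ω + (1 - 1 / 2) * Y ω) := by
    funext ω
    simp only [Pi.add_apply]
    ring
  rw [hsum, hpos _ hmid 2 two_pos]
  linarith [hconv X hX Y hY (1 / 2) (by norm_num) (by norm_num)]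

end Premium

section RMax

variable {Ω : Type*} [MeasurableSpace Ω] {C : Set (Ω → ℝ)} {H : (Ω → ℝ) → ℝ}
  (hconst : ∀ m : ℝ, (fun _ => m) ∈ C)
  (haddC : ∀ X ∈ C, ∀ Y ∈ C, (fun ω => X ω + Y ω) ∈ C)
  (hH : IsPremium C H)

include hconst haddC hH in
theorem RMax_le {X X₀ : Ω → ℝ} (hX : X ∈ Bb Ω) (hX₀ : X₀ ∈ C) (hle : X ≤ X₀) :
    RMax C H X ≤ H X₀ := by
  obtain ⟨-, c, hc⟩ := hX
  refine csInf_le ⟨-c, ?_⟩ ⟨X₀, hX₀, hle, rfl⟩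
  rintro _ ⟨X₁, hX₁, hle₁, rfl⟩
  have h := hH.2.2 _ (haddC _ hX₁ _ (hconst c))
    fun ω => by linarith [(abs_le.1 (hc ω)).1, hle₁ ω]
  rw [hH.1 X₁ hX₁ c] at h
  linarith

include hconst in
theorem le_RMax {X : Ω → ℝ} (hX : X ∈ Bb Ω) {a : ℝ}
    (h : ∀ X₀ ∈ C, X ≤ X₀ → a ≤ H X₀) : a ≤ RMax C H X := by
  obtain ⟨-, c, hc⟩ := hX
  refine le_csInf ⟨_, fun _ => c, hconst c, fun ω => (abs_le.1 (hc ω)).2, rfl⟩ ?_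
  rintro _ ⟨X₀, hX₀, hle, rfl⟩
  exact h X₀ hX₀ hle

include hconst haddC hH in
theorem RMax_add_le (hsub : ∀ X ∈ C, ∀ Y ∈ C, H (X + Y) ≤ H X + H Y)
    {X Y : Ω → ℝ} (hX : X ∈ Bb Ω) (hY : Y ∈ Bb Ω) :
    RMax C H (X + Y) ≤ RMax C H X + RMax C H Y := by
  suffices h : RMax C H (X + Y) - RMax C H X ≤ RMax C H Y by linarith
  refine le_RMax hconst hY fun Y₀ hY₀ hleY => ?_
  suffices h : RMax C H (X + Y) - H Y₀ ≤ RMax C H X by linarith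
  refine le_RMax hconst hX fun X₀ hX₀ hleX => ?_
  have h : RMax C H (X + Y) ≤ H (X₀ + Y₀) :=
    RMax_le hconst haddC hH (Bb.add_mem hX hY) (haddC X₀ hX₀ Y₀ hY₀) (add_le_add hleX hleY)
  linarith [hsub X₀ hX₀ Y₀ hY₀]

include hconst haddC hH in
theorem RMax_smul_le (hsmulC : ∀ X ∈ C, ∀ c : ℝ, (fun ω => c * X ω) ∈ C)
    (hpos : ∀ X ∈ C, ∀ l : ℝ, 0 < l → H (fun ω => l * X ω) = l * H X)
    {X : Ω → ℝ} (hX : X ∈ Bb Ω) {c : ℝ} (hc : 0 < c) :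
    RMax C H (c • X) ≤ c * RMax C H X := by
  rw [← div_le_iff₀' hc]
  refine le_RMax hconst hX fun X₀ hX₀ hle => ?_
  rw [div_le_iff₀' hc, ← hpos X₀ hX₀ c hc]
  exact RMax_le hconst haddC hH (Bb.smul_mem c hX) (hsmulC X₀ hX₀ c)
    (smul_le_smul_of_nonneg_left hle hc.le)

include hconst haddC hH in
theorem RMax_smul (hsmulC : ∀ X ∈ C, ∀ c : ℝ, (fun ω => c * X ω) ∈ C)
    (hpos : ∀ X ∈ C, ∀ l : ℝ, 0 < l → H (fun ω => l * X ω) = l * H X)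
    {X : Ω → ℝ} (hX : X ∈ Bb Ω) {c : ℝ} (hc : 0 < c) :
    RMax C H (c • X) = c * RMax C H X := by
  refine le_antisymm (RMax_smul_le hconst haddC hH hsmulC hpos hX hc) ?_
  have h := RMax_smul_le hconst haddC hH hsmulC hpos (Bb.smul_mem c hX) (inv_pos.2 hc)
  rw [inv_smul_smul₀ hc.ne'] at h
  rwa [← le_inv_mul_iff₀ hc]

include hconst haddC hH in
theorem isNPLF_of_le_RMax (hCB : C ⊆ Bb Ω) (μ : (Ω → ℝ) →ₗ[ℝ] ℝ)
    (hμ : ∀ X ∈ Bb Ω, μ X ≤ RMax C H X) : IsNPLF μ ∧ ∀ Z ∈ C, μ Z ≤ H Z := by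
  have hle : ∀ Z ∈ C, μ Z ≤ H Z := fun Z hZ =>
    (hμ Z (hCB hZ)).trans (RMax_le hconst haddC hH (hCB hZ) hZ le_rfl)
  refine ⟨isNPLF_of_linearMap μ (fun X hX hX0 => ?_) ?_, hle⟩
  · have h : μ (-X) ≤ H 0 :=
      (hμ _ ((Bb.submodule Ω).neg_mem hX)).trans
        (RMax_le hconst haddC hH ((Bb.submodule Ω).neg_mem hX) (hconst 0) (neg_nonpos.2 hX0))
    rw [map_neg] at h
    linarith [show H 0 = 0 from hH.2.1]
  · have h₁ : μ 1 ≤ 1 := (hle _ (hconst 1)).trans (hH.apply_const hconst 1).le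
    have h₂ : μ (-1) ≤ -1 := (hle _ (hconst (-1))).trans (hH.apply_const hconst (-1)).le
    rw [map_neg] at h₂
    linarith

include hconst in
theorem IsNPLF.apply_le_RMax (hCB : C ⊆ Bb Ω) {μ : (Ω → ℝ) → ℝ} (hμ : IsNPLF μ)
    (hdom : ∀ Z ∈ C, μ Z ≤ H Z) {X : Ω → ℝ} (hX : X ∈ Bb Ω) : μ X ≤ RMax C H X :=
  le_RMax hconst hX fun X₀ hX₀ hle => (hμ.mono hX (hCB hX₀) hle).trans (hdom X₀ hX₀)

end RMax

/-- for a sublinear premium principle, `R_Max` is a coherent risk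
measure: `R_Max(X) = max_{μ ∈ 𝒫} μ(X)` where `𝒫` is the (nonempty) set of
normalized positive linear functionals dominated by `H` on `C`. -/
theorem sublinear_coherent_representation {Ω : Type*} [MeasurableSpace Ω]
    (C : Set (Ω → ℝ)) (H : (Ω → ℝ) → ℝ)
    (hCB : C ⊆ Bb Ω)
    (hconst : ∀ m : ℝ, (fun _ => m) ∈ C)
    (haddC : ∀ X ∈ C, ∀ Y ∈ C, (fun ω => X ω + Y ω) ∈ C)
    (hsmulC : ∀ X ∈ C, ∀ c : ℝ, (fun ω => c * X ω) ∈ C)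
    (hH : IsPremium C H) (hconv : IsConvexOn C H)
    (hpos : ∀ X ∈ C, ∀ l : ℝ, 0 < l → H (fun ω => l * X ω) = l * H X) :
    (∃ μ : (Ω → ℝ) → ℝ, IsNPLF μ ∧ ∀ Z ∈ C, μ Z ≤ H Z) ∧
    (∀ X ∈ Bb Ω,
      IsGreatest {y : ℝ | ∃ μ : (Ω → ℝ) → ℝ,
        (IsNPLF μ ∧ ∀ Z ∈ C, μ Z ≤ H Z) ∧ y = μ X} (RMax C H X)) := by
  have hsub : ∀ X ∈ C, ∀ Y ∈ C, H (X + Y) ≤ H X + H Y :=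
    fun X hX Y hY => hconv.add_le haddC hsmulC hpos hX hY
  have hmax : ∀ X ∈ Bb Ω, ∃ μ : (Ω → ℝ) → ℝ,
      (IsNPLF μ ∧ ∀ Z ∈ C, μ Z ≤ H Z) ∧ RMax C H X = μ X := by
    intro X hX
    obtain ⟨g, hgX, hg⟩ := exists_linearMap_le_sublinear_eq
      (fun x : Bb.submodule Ω => RMax C H x)
      (fun c hc x => RMax_smul hconst haddC hH hsmulC hpos x.2 hc)
      (fun x y => RMax_add_le hconst haddC hH hsub x.2 y.2) ⟨X, hX⟩
    obtain ⟨μ, rfl⟩ := LinearMap.exists_extend g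
    exact ⟨μ, isNPLF_of_le_RMax hconst haddC hH hCB μ fun Y hY => hg ⟨Y, hY⟩, hgX.symm⟩
  refine ⟨?_, fun X hX => ⟨hmax X hX, ?_⟩⟩
  · obtain ⟨μ, hμ, -⟩ := hmax 0 (Bb.const_mem 0)
    exact ⟨μ, hμ⟩
  · rintro _ ⟨μ, ⟨hμ, hdom⟩, rfl⟩
    exact hμ.apply_le_RMax hconst hCB hdom hX
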